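/- arXiv:1608.00774 — 4 statements merged into one kernel-verified Lean document; each statement's English description precedes it below -/
import Mathlib

section
/- Let G be a finite group and {x, y} any generating pair of G. Then the center Z(G) is contained in Σ(x,y), where Σ(x,y) is the union of all conjugates of all powers of x, y, and xy. Consequently, if Z(G) is non-trivial and every generating pair's Σ-set contains Z(G), a group like C_q ≀ C_r with non-trivial center cannot be a Beauville group. -/
open Subgroup

/-- Σ(g,h): the union of all conjugates of all (nontrivial-index) powers of g, h and gh. -/
def SigmaSet {G : Type*} [Group G] (g h : G) : Set G :=
  { z | ∃ i : ℕ, 1 ≤ i ∧ i ≤ Nat.card G ∧ ∃ k : G,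
      z = k⁻¹ * g ^ i * k ∨ z = k⁻¹ * h ^ i * k ∨ z = k⁻¹ * (g * h) ^ i * k }

/-- A Beauville group. -/
def IsBeauville (G : Type*) [Group G] : Prop :=
  ∃ x₁ y₁ x₂ y₂ : G, closure {x₁, y₁} = ⊤ ∧ closure {x₂, y₂} = ⊤ ∧
    SigmaSet x₁ y₁ ∩ SigmaSet x₂ y₂ = {1}

/-- A strongly real Beauville group. -/
def IsStronglyRealBeauville (G : Type*) [Group G] : Prop :=
  ∃ x₁ y₁ x₂ y₂ : G, closure {x₁, y₁} = ⊤ ∧ closure {x₂, y₂} = ⊤ ∧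
    SigmaSet x₁ y₁ ∩ SigmaSet x₂ y₂ = {1} ∧
    ∃ (φ : MulAut G) (g₁ g₂ : G),
      g₁ * φ x₁ * g₁⁻¹ = x₁⁻¹ ∧ g₁ * φ y₁ * g₁⁻¹ = y₁⁻¹ ∧
      g₂ * φ x₂ * g₂⁻¹ = x₂⁻¹ ∧ g₂ * φ y₂ * g₂⁻¹ = y₂⁻¹

/-- The shift automorphism of the base group of the wreath product. -/
def shiftAut (q r : ℕ) (c : ZMod r) :
    (ZMod r → Multiplicative (ZMod q)) ≃* (ZMod r → Multiplicative (ZMod q)) where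
  toFun f j := f (j - c)
  invFun f j := f (j + c)
  left_inv f := by funext j; simp
  right_inv f := by funext j; simp
  map_mul' f g := rfl

/-- The action of the top group C_r on the base group (C_q)^r by cyclic shift. -/
def wrAct (q r : ℕ) :
    Multiplicative (ZMod r) →* MulAut (ZMod r → Multiplicative (ZMod q)) where
  toFun c := shiftAut q r c.toAdd
  map_one' := by ext f j; simp [shiftAut]
  map_mul' a b := by ext f j; simp [shiftAut, sub_sub]

/-- The wreath product C_q ≀ C_r = (C_q)^r ⋊ C_r. -/
abbrev Wr (q r : ℕ) : Type :=
  (ZMod r → Multiplicative (ZMod q)) ⋊[wrAct q r] Multiplicative (ZMod r)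

/-- The standard base generator x of C_q ≀ C_r (generating one base coordinate). -/
def wx (q r : ℕ) : Wr q r :=
  SemidirectProduct.inl (Pi.mulSingle 0 (Multiplicative.ofAdd (1 : ZMod q)))

/-- The standard top generator y of C_q ≀ C_r (cyclically permuting the coordinates). -/
def wy (q r : ℕ) : Wr q r := SemidirectProduct.inr (Multiplicative.ofAdd (1 : ZMod r))

/-! The centre of `C_q ≀ C_r` consists of the constant functions of the base group. Two
homomorphisms detect generation: the product of the base coordinates onto `C_q`, and the
projection onto `C_r`. Reduced modulo `p`, neither kills a generating pair, so some `u` among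
`x`, `y`, `x * y` maps to a unit `s` of `ZMod q` and a unit `c` of `ZMod r`. Then `u ^ r`
multiplies the base coordinates of `u` along a full orbit of the shift by `c`, so it is the
constant function with value `s`, which generates `C_q`; hence the whole centre lies in `⟨u⟩`.
A non-trivial central element then lies in both Σ-sets of any candidate Beauville structure. -/

section SigmaSet

variable {G : Type*} [Group G]

theorem exists_pow_eq_of_mem_zpowers [Finite G] {g z : G} (hz : z ∈ zpowers g) :
    ∃ i, 1 ≤ i ∧ i ≤ Nat.card G ∧ z = g ^ i := by
  obtain ⟨n, rfl⟩ : ∃ n : ℕ, g ^ n = z := mem_powers_iff_mem_zpowers.mpr hz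
  have hord : 0 < orderOf g := orderOf_pos g
  by_cases hn : n % orderOf g = 0
  · refine ⟨orderOf g, hord, orderOf_le_card, ?_⟩
    rw [← pow_mod_orderOf, hn, pow_zero, pow_orderOf_eq_one]
  · exact ⟨n % orderOf g, Nat.one_le_iff_ne_zero.mpr hn,
      (Nat.mod_lt n hord).le.trans orderOf_le_card, (pow_mod_orderOf g n).symm⟩

theorem mem_sigmaSet_of_mem_zpowers [Finite G] {g h u z : G} (hu : u = g ∨ u = h ∨ u = g * h)
    (hz : z ∈ zpowers u) : z ∈ SigmaSet g h := by
  obtain ⟨i, hi₁, hi, rfl⟩ := exists_pow_eq_of_mem_zpowers hz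
  refine ⟨i, hi₁, hi, 1, ?_⟩
  simp only [inv_one, one_mul, mul_one]
  rcases hu with rfl | rfl | rfl <;> simp

theorem exists_notMem_notMem_of_closure_pair_eq_top {x y : G} {H K : Subgroup G}
    (hH : H ≠ ⊤) (hK : K ≠ ⊤) (hxy : closure {x, y} = ⊤) :
    ∃ u, (u = x ∨ u = y ∨ u = x * y) ∧ u ∉ H ∧ u ∉ K := by
  have pair_not_le (L : Subgroup G) (hL : L ≠ ⊤) : ¬ (x ∈ L ∧ y ∈ L) := fun ⟨hx, hy⟩ =>
    hL (top_le_iff.mp (hxy ▸ (closure_le L).mpr (Set.insert_subset hx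
      (Set.singleton_subset_iff.mpr hy))))
  have hnotH := pair_not_le H hH
  have hnotK := pair_not_le K hK
  by_cases hx₁ : x ∈ H
  · have hy₁ : y ∉ H := fun hy => hnotH ⟨hx₁, hy⟩
    by_cases hy₂ : y ∈ K
    · have hx₂ : x ∉ K := fun hx => hnotK ⟨hx, hy₂⟩
      exact ⟨x * y, by simp, (H.mul_mem_cancel_left hx₁).not.mpr hy₁,
        (K.mul_mem_cancel_right hy₂).not.mpr hx₂⟩
    · exact ⟨y, by simp, hy₁, hy₂⟩
  · by_cases hx₂ : x ∈ K
    · have hy₂ : y ∉ K := fun hy => hnotK ⟨hx₂, hy⟩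
      by_cases hy₁ : y ∈ H
      · exact ⟨x * y, by simp, (H.mul_mem_cancel_right hy₁).not.mpr hx₁,
          (K.mul_mem_cancel_left hx₂).not.mpr hy₂⟩
      · exact ⟨y, by simp, hy₁, hy₂⟩
    · exact ⟨x, by simp, hx₁, hx₂⟩

theorem not_isBeauville_of_center_subset_sigmaSet {z : G} (hz : z ∈ center G) (hz₁ : z ≠ 1)
    (h : ∀ x y : G, closure {x, y} = ⊤ → (center G : Set G) ⊆ SigmaSet x y) :
    ¬ IsBeauville G := by
  rintro ⟨x₁, y₁, x₂, y₂, h₁, h₂, hdisjoint⟩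
  have hmem : z ∈ SigmaSet x₁ y₁ ∩ SigmaSet x₂ y₂ := ⟨h _ _ h₁ hz, h _ _ h₂ hz⟩
  exact hz₁ (by rwa [hdisjoint] at hmem)

end SigmaSet

section PrimePower

variable {p d : ℕ}

def reduceModPrime (p d : ℕ) (hd : d ≠ 0) :
    Multiplicative (ZMod (p ^ d)) →* Multiplicative (ZMod p) :=
  (ZMod.castHom (dvd_pow_self p hd) (ZMod p)).toAddMonoidHom.toMultiplicative

theorem isUnit_toAdd_of_reduceModPrime_ne_one (hp : p.Prime) (hd : d ≠ 0)
    {s : Multiplicative (ZMod (p ^ d))} (hs : reduceModPrime p d hd s ≠ 1) : IsUnit s.toAdd := by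
  have : NeZero (p ^ d) := ⟨pow_ne_zero d hp.ne_zero⟩
  rw [← ZMod.natCast_zmod_val s.toAdd,
    ZMod.isUnit_natCast_iff_not_dvd_pow hp (Nat.pos_of_ne_zero hd)]
  intro hdvd
  apply hs
  change Multiplicative.ofAdd (ZMod.castHom (dvd_pow_self p hd) (ZMod p) s.toAdd) = 1
  rw [← ZMod.natCast_zmod_val s.toAdd, map_natCast, (ZMod.natCast_eq_zero_iff _ p).mpr hdvd,
    ofAdd_zero]

theorem ker_reduceModPrime_comp_ne_top (hp : p.Prime) (hd : d ≠ 0) {G : Type*} [Group G]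
    {f : G →* Multiplicative (ZMod (p ^ d))} {g : G} (hg : f g = Multiplicative.ofAdd 1) :
    ((reduceModPrime p d hd).comp f).ker ≠ ⊤ := by
  have : Fact p.Prime := ⟨hp⟩
  intro htop
  have hmem : g ∈ ((reduceModPrime p d hd).comp f).ker := htop ▸ Subgroup.mem_top g
  rw [MonoidHom.mem_ker, MonoidHom.comp_apply, hg] at hmem
  change Multiplicative.ofAdd (ZMod.castHom (dvd_pow_self p hd) (ZMod p) 1) = 1 at hmem
  rw [map_one] at hmem
  exact one_ne_zero (ofAdd_eq_one.mp hmem)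

end PrimePower

instance SemidirectProduct.instFinite {N H : Type*} [Group N] [Group H] {φ : H →* MulAut N}
    [Finite N] [Finite H] : Finite (N ⋊[φ] H) :=
  Finite.of_equiv _ SemidirectProduct.equivProd.symm

theorem ZMod.prod_range_natCast {M : Type*} [CommMonoid M] (n : ℕ) [NeZero n]
    (g : ZMod n → M) : ∏ i ∈ Finset.range n, g i = ∏ x, g x :=
  Finset.prod_nbij' (fun i => i) ZMod.val (by simp) (by simp [ZMod.val_lt])
    (fun i hi => ZMod.val_cast_of_lt (Finset.mem_range.mp hi)) (fun x _ => ZMod.natCast_zmod_val x)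
    (fun _ _ => rfl)

namespace Wr

variable {q r : ℕ}

theorem wrAct_apply (c : Multiplicative (ZMod r)) (f : ZMod r → Multiplicative (ZMod q))
    (j : ZMod r) : wrAct q r c f j = f (j - c.toAdd) := rfl

def diag (q r : ℕ) : Multiplicative (ZMod q) →* Wr q r :=
  SemidirectProduct.inl.comp (Pi.constMonoidHom (ZMod r) _)

theorem diag_mem_center (t : Multiplicative (ZMod q)) : diag q r t ∈ center (Wr q r) := by
  refine Subgroup.mem_center_iff.mpr fun g => SemidirectProduct.ext (funext fun j => ?_) ?_
  · simp [diag, wrAct_apply, mul_comm]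
  · simp [diag]

theorem diag_injective : Function.Injective (diag q r) := fun _ _ h =>
  congrFun (congrArg SemidirectProduct.left h) 0

theorem center_le_range_diag [Nontrivial (ZMod q)] [NeZero r] :
    center (Wr q r) ≤ (diag q r).range := by
  intro z hz
  have hcomm := Subgroup.mem_center_iff.mp hz
  have shift_invariant : ∀ j : ZMod r, z.left (j + 1) = z.left j := fun j => by
    simpa [wy, wrAct_apply] using
      (congrFun (congrArg SemidirectProduct.left (hcomm (wy q r))) (j + 1)).symm
  have hconst : ∀ j, z.left j = z.left 0 := by
    have hnat : ∀ n : ℕ, z.left n = z.left 0 := fun n => by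
      induction n with
      | zero => simp
      | succ n ih => rw [Nat.cast_succ, shift_invariant, ih]
    intro j
    rw [← ZMod.natCast_zmod_val j]
    exact hnat j.val
  have hright : z.right = 1 := by
    have h := congrFun (congrArg SemidirectProduct.left (hcomm (wx q r))) z.right.toAdd
    simp only [wx, SemidirectProduct.mul_left, SemidirectProduct.left_inl,
      SemidirectProduct.right_inl, Pi.mul_apply, wrAct_apply, sub_self, map_one,
      MulAut.one_apply] at h
    by_contra hne
    have hc : z.right.toAdd ≠ 0 := by simpa using hne
    rw [Pi.mulSingle_eq_of_ne hc, Pi.mulSingle_eq_same, one_mul] at h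
    simp at h
  exact ⟨z.left 0, SemidirectProduct.ext (funext fun j => (hconst j).symm) hright.symm⟩

def coordProd (q r : ℕ) [NeZero r] : Wr q r →* Multiplicative (ZMod q) :=
  MonoidHom.mk' (fun z => ∏ j, z.left j) fun u v => by
    simp only [SemidirectProduct.mul_left, Pi.mul_apply, wrAct_apply, Finset.prod_mul_distrib]
    congr 1
    exact Equiv.prod_comp (Equiv.subRight u.right.toAdd) v.left

theorem left_pow (u : Wr q r) (n : ℕ) (j : ZMod r) :
    (u ^ n).left j = ∏ i ∈ Finset.range n, u.left (j - i * u.right.toAdd) := by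
  induction n with
  | zero => simp
  | succ n ih =>
    have hright : (u ^ n).right = u.right ^ n := map_pow SemidirectProduct.rightHom u n
    rw [pow_succ, SemidirectProduct.mul_left, Pi.mul_apply, ih, wrAct_apply, hright,
      Finset.prod_range_succ, toAdd_pow, nsmul_eq_mul]

theorem pow_card_eq_diag [NeZero r] {u : Wr q r} (hu : IsUnit u.right.toAdd) :
    u ^ r = diag q r (coordProd q r u) := by
  obtain ⟨c, hc⟩ := hu
  refine SemidirectProduct.ext (funext fun j => ?_) ?_
  · rw [left_pow, ← hc, ZMod.prod_range_natCast r (fun x => u.left (j - x * c))]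
    exact Equiv.prod_comp ((Units.mulRight c).trans (Equiv.subLeft j)) u.left
  · rw [← SemidirectProduct.rightHom_eq_right, map_pow]
    exact Multiplicative.toAdd.injective (by simp [diag])

theorem center_le_zpowers [Nontrivial (ZMod q)] [NeZero r] {u : Wr q r}
    (hσ : IsUnit (coordProd q r u).toAdd) (hτ : IsUnit u.right.toAdd) :
    center (Wr q r) ≤ zpowers u := by
  obtain ⟨s, hs⟩ := hσ
  rintro _ hz
  obtain ⟨t, rfl⟩ := center_le_range_diag hz
  have ht : t = coordProd q r u ^ ((t.toAdd * ↑s⁻¹ : ZMod q).cast : ℤ) :=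
    Multiplicative.toAdd.injective (by simp [← hs, mul_assoc])
  rw [ht, map_zpow, ← pow_card_eq_diag hτ, ← zpow_natCast, ← zpow_mul]
  exact zpow_mem_zpowers u _

theorem center_subset_sigmaSet {p a b : ℕ} (hp : p.Prime) (ha : a ≠ 0) (hb : b ≠ 0)
    (x y : Wr (p ^ a) (p ^ b)) (hxy : closure {x, y} = ⊤) :
    (center (Wr (p ^ a) (p ^ b)) : Set (Wr (p ^ a) (p ^ b))) ⊆ SigmaSet x y := by
  have : NeZero (p ^ a) := ⟨pow_ne_zero a hp.ne_zero⟩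
  have : NeZero (p ^ b) := ⟨pow_ne_zero b hp.ne_zero⟩
  have : Fact (1 < p ^ a) := ⟨Nat.one_lt_pow ha hp.one_lt⟩
  have hσ : coordProd (p ^ a) (p ^ b) (wx _ _) = Multiplicative.ofAdd 1 :=
    Fintype.prod_pi_mulSingle' 0 _
  obtain ⟨u, hu, hσu, hτu⟩ := exists_notMem_notMem_of_closure_pair_eq_top
    (ker_reduceModPrime_comp_ne_top hp ha hσ)
    (ker_reduceModPrime_comp_ne_top hp hb (SemidirectProduct.rightHom_inr _)) hxy
  intro z hz
  exact mem_sigmaSet_of_mem_zpowers hu <| center_le_zpowers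
    (isUnit_toAdd_of_reduceModPrime_ne_one hp ha hσu)
    (isUnit_toAdd_of_reduceModPrime_ne_one hp hb hτu) hz

end Wr

/-- for the wreath product C_q ≀ C_r (q, r powers of a prime p, both > 1),
the Σ-set of every generating pair contains the (non-trivial) center; consequently
C_q ≀ C_r is not a Beauville group. -/
theorem stmt1 (p a b : ℕ) (hp : p.Prime) (q r : ℕ) (hq : q = p ^ a) (hr : r = p ^ b)
    (ha : 1 ≤ a) (hb : 1 ≤ b) :
    (∀ x y : Wr q r, closure {x, y} = ⊤ →
      (Subgroup.center (Wr q r) : Set (Wr q r)) ⊆ SigmaSet x y) ∧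
    ¬ IsBeauville (Wr q r) := by
  subst hq hr
  have hcenter := Wr.center_subset_sigmaSet hp (by omega : a ≠ 0) (by omega : b ≠ 0)
  have : Fact (1 < p ^ a) := ⟨Nat.one_lt_pow (by omega) hp.one_lt⟩
  refine ⟨hcenter, not_isBeauville_of_center_subset_sigmaSet
    (Wr.diag_mem_center (Multiplicative.ofAdd 1)) ?_ hcenter⟩
  exact (map_ne_one_iff _ Wr.diag_injective).mpr (by simp)
end

section
/- Let n > 1 be a natural number coprime to 6. Then the abelian group C_n × C_n is a Beauville group. -/
open Subgroup

/-!
In an abelian group conjugation is trivial, so `SigmaSet g h` is contained in the union of the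
cyclic subgroups generated by `g`, `h` and `g * h`; two generating pairs therefore form a
Beauville structure as soon as these three cyclic subgroups meet the three of the other pair
trivially. In `C_n × C_n`, viewed as `(ZMod n)²`, the lines spanned by `u` and `v` meet
trivially, and `u`, `v` generate, whenever `det (u, v)` is a unit. For the pairs `(1,0), (0,1)`
and `(1,2), (1,-1)` the relevant determinants are `±1`, `±2` and `-3`, all units when
`gcd (n, 6) = 1`.
-/

section CommGroup

variable {G : Type*} [CommGroup G]

lemma exists_mem_zpowers_of_mem_sigmaSet {g h z : G} (hz : z ∈ SigmaSet g h) :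
    ∃ u ∈ ({g, h, g * h} : Set G), z ∈ zpowers u := by
  obtain ⟨i, -, -, k, hk⟩ := hz
  simp only [inv_mul_cancel_comm] at hk
  rcases hk with rfl | rfl | rfl
  · exact ⟨g, by simp, pow_mem (mem_zpowers g) i⟩
  · exact ⟨h, by simp, pow_mem (mem_zpowers h) i⟩
  · exact ⟨g * h, by simp, pow_mem (mem_zpowers _) i⟩

lemma one_mem_sigmaSet [Finite G] (g h : G) : (1 : G) ∈ SigmaSet g h :=
  ⟨Nat.card G, Nat.card_pos, le_rfl, 1, Or.inl (by simp [pow_card_eq_one'])⟩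

theorem isBeauville_of_disjoint_zpowers [Finite G] {x₁ y₁ x₂ y₂ : G}
    (h₁ : closure {x₁, y₁} = ⊤) (h₂ : closure {x₂, y₂} = ⊤)
    (hdisj : ∀ u ∈ ({x₁, y₁, x₁ * y₁} : Set G), ∀ v ∈ ({x₂, y₂, x₂ * y₂} : Set G),
      Disjoint (zpowers u) (zpowers v)) :
    IsBeauville G := by
  refine ⟨x₁, y₁, x₂, y₂, h₁, h₂, Set.eq_singleton_iff_unique_mem.mpr
    ⟨⟨one_mem_sigmaSet _ _, one_mem_sigmaSet _ _⟩, ?_⟩⟩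
  rintro z ⟨hz₁, hz₂⟩
  obtain ⟨u, hu, hzu⟩ := exists_mem_zpowers_of_mem_sigmaSet hz₁
  obtain ⟨v, hv, hzv⟩ := exists_mem_zpowers_of_mem_sigmaSet hz₂
  exact disjoint_def.mp (hdisj u hu v hv) hzu hzv

end CommGroup

section Plane

variable {R : Type*} [CommRing R]

def vec (a b : R) : Multiplicative R × Multiplicative R :=
  (Multiplicative.ofAdd a, Multiplicative.ofAdd b)

lemma vec_mul (a b c d : R) : vec a b * vec c d = vec (a + c) (b + d) := rfl

def pairDet (u v : Multiplicative R × Multiplicative R) : R :=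
  u.1.toAdd * v.2.toAdd - u.2.toAdd * v.1.toAdd

lemma pairDet_vec (a b c d : R) : pairDet (vec a b) (vec c d) = a * d - b * c := rfl

lemma pairDet_self (u : Multiplicative R × Multiplicative R) : pairDet u u = 0 := by
  simp only [pairDet]; ring

lemma toAdd_fst_zpow (u : Multiplicative R × Multiplicative R) (k : ℤ) :
    (u ^ k).1.toAdd = k * u.1.toAdd := by
  simp [toAdd_zpow]

lemma toAdd_snd_zpow (u : Multiplicative R × Multiplicative R) (k : ℤ) :
    (u ^ k).2.toAdd = k * u.2.toAdd := by
  simp [toAdd_zpow]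

lemma pairDet_zpow_left (u v : Multiplicative R × Multiplicative R) (k : ℤ) :
    pairDet (u ^ k) v = k * pairDet u v := by
  simp only [pairDet, toAdd_fst_zpow, toAdd_snd_zpow]; ring

theorem disjoint_zpowers_of_isUnit_pairDet {u v : Multiplicative R × Multiplicative R}
    (hdet : IsUnit (pairDet u v)) : Disjoint (zpowers u) (zpowers v) := by
  rw [disjoint_def]
  rintro _ ⟨k, rfl⟩ ⟨m, hm : v ^ m = u ^ k⟩
  have hk : (k : R) = 0 := by
    have : (k : R) * pairDet u v = m * pairDet v v := by
      rw [← pairDet_zpow_left, ← pairDet_zpow_left, hm]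
    rwa [pairDet_self, mul_zero, hdet.mul_left_eq_zero] at this
  ext
  · simp only [toAdd_fst_zpow, hk, zero_mul]; rfl
  · simp only [toAdd_snd_zpow, hk, zero_mul]; rfl

end Plane

theorem closure_pair_eq_top_of_isUnit_pairDet {n : ℕ}
    {u v : Multiplicative (ZMod n) × Multiplicative (ZMod n)} (hdet : IsUnit (pairDet u v)) :
    Subgroup.closure {u, v} = ⊤ := by
  obtain ⟨d, hd⟩ := hdet
  refine eq_top_iff.mpr fun z _ => ?_
  -- Cramer's rule: `z = α • u + β • v`
  set α := (↑d⁻¹ : ZMod n) * pairDet z v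
  set β := (↑d⁻¹ : ZMod n) * pairDet u z
  have hz : z = u ^ (α.cast : ℤ) * v ^ (β.cast : ℤ) := by
    have hd' : (↑d⁻¹ : ZMod n) * pairDet u v = 1 := by rw [← hd, Units.inv_mul]
    simp only [pairDet] at hd'
    ext
    · simp only [Prod.fst_mul, toAdd_mul, toAdd_fst_zpow, ZMod.intCast_zmod_cast, α, β, pairDet]
      linear_combination -z.1.toAdd * hd'
    · simp only [Prod.snd_mul, toAdd_mul, toAdd_snd_zpow, ZMod.intCast_zmod_cast, α, β, pairDet]
      linear_combination -z.2.toAdd * hd'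
  rw [hz]
  exact mul_mem (zpow_mem (subset_closure (by simp)) _) (zpow_mem (subset_closure (by simp)) _)

lemma isUnit_natCast_of_coprime_of_dvd {n m d : ℕ} (hcop : Nat.Coprime n m) (hd : d ∣ m) :
    IsUnit (d : ZMod n) :=
  (ZMod.isUnit_iff_coprime d n).mpr (hcop.coprime_dvd_right hd).symm

theorem stmt2_general (n : ℕ) (hcop : Nat.Coprime n 6) :
    IsBeauville (Multiplicative (ZMod n) × Multiplicative (ZMod n)) := by
  have : NeZero n := ⟨by rintro rfl; norm_num at hcop⟩
  have h2 : IsUnit (2 : ZMod n) := by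
    exact_mod_cast isUnit_natCast_of_coprime_of_dvd hcop (by norm_num : 2 ∣ 6)
  have h3 : IsUnit (3 : ZMod n) := by
    exact_mod_cast isUnit_natCast_of_coprime_of_dvd hcop (by norm_num : 3 ∣ 6)
  refine isBeauville_of_disjoint_zpowers
    (x₁ := vec 1 0) (y₁ := vec 0 1) (x₂ := vec 1 2) (y₂ := vec 1 (-1))
    (closure_pair_eq_top_of_isUnit_pairDet (by simp [pairDet_vec]))
    (closure_pair_eq_top_of_isUnit_pairDet (by norm_num [pairDet_vec, h3])) ?_
  simp only [Set.mem_insert_iff, Set.mem_singleton_iff, vec_mul]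
  rintro u (rfl | rfl | rfl) v (rfl | rfl | rfl) <;>
    apply disjoint_zpowers_of_isUnit_pairDet <;> norm_num [pairDet_vec, h2]

/-- Catanese: for n > 1 coprime to 6, the abelian group C_n × C_n is a
Beauville group. -/
theorem stmt2 (n : ℕ) (hn : 1 < n) (hcop : Nat.Coprime n 6) :
    IsBeauville (Multiplicative (ZMod n) × Multiplicative (ZMod n)) :=
  stmt2_general n hcop
end

section
/- Let q, r be powers of a prime p with p not dividing 3 (i.e. p ≠ 3), r > 1, and let G = C_q ≀ C_r with standard generators x (base generator) and y (top cyclic permutation). Then the two elements x·y·x and x^y · x · x^{y⁻¹} generate G, where x^y = y⁻¹xy. -/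
open Subgroup

/-! The subgroup `K` generated by `u = x y x` and `v = x^y x x^{y⁻¹}` contains `v`, which is the base
element `δ₋₁ + δ₀ + δ₁` (written additively), and, since `u` maps onto the generator of the top
group and the base is abelian, all its translates. The sums `∑ w(c) • (δ₋₁ + δ₀ + δ₁)(· - c)` are the
images of `T² + T + 1`, with `T` the shift of `ZMod r → ZMod q`. As `q` and `r` are powers of the same
prime, `T - 1` is nilpotent, so `T² + T + 1 = 3 + (T - 1)(T + 2)` is invertible when `p ≠ 3`. Hence `K`
contains the base group, and with `u` the whole wreath product. -/

open Polynomial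

theorem Polynomial.C_dvd_X_add_one_pow_sub {p : ℕ} (hp : p.Prime) (b : ℕ) :
    C (p : ℤ) ∣ (X + 1 : ℤ[X]) ^ p ^ b - (X ^ p ^ b + 1) := by
  have := Fact.mk hp
  have h : (X + 1 : ℤ[X]) ^ p ^ b - (X ^ p ^ b + 1) ∈
      RingHom.ker (mapRingHom (Int.castRingHom (ZMod p))) := by
    simp [add_pow_char_pow]
  rwa [ker_mapRingHom, ZMod.ker_intCastRingHom, Ideal.map_span, Set.image_singleton,
    Ideal.mem_span_singleton] at h

theorem isNilpotent_sub_one_of_pow_prime_pow_eq_one {R : Type*} [Ring R] {p : ℕ} (hp : p.Prime)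
    (hpR : IsNilpotent (p : R)) {t : R} {b : ℕ} (ht : t ^ p ^ b = 1) : IsNilpotent (t - 1) := by
  obtain ⟨g, hg⟩ := C_dvd_X_add_one_pow_sub hp b
  have key := congrArg (aeval (t - 1)) hg
  simp only [map_sub, map_add, map_pow, map_one, map_mul, aeval_X, sub_add_cancel, ht,
    map_natCast] at key
  have hpow : (t - 1) ^ p ^ b = -((p : R) * aeval (t - 1) g) := by
    rw [← key]; abel
  refine IsNilpotent.of_pow (m := p ^ b) ?_
  rw [hpow]
  exact ((Nat.cast_commute p _).isNilpotent_mul_right hpR).neg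

theorem isUnit_sq_add_add_one_of_isNilpotent_sub_one {R : Type*} [Ring R] (h3 : IsUnit (3 : R))
    {t : R} (ht : IsNilpotent (t - 1)) : IsUnit (t ^ 2 + t + 1) := by
  have hnil : IsNilpotent ((t - 1) * (t + 2)) :=
    (((Commute.refl t).sub_left (Commute.one_left t)).add_right
      (Commute.ofNat_right _ 2)).isNilpotent_mul_right ht
  convert hnil.isUnit_add_left_of_commute h3 (Commute.ofNat_right _ 3) using 1
  noncomm_ring
  norm_num

section Shift

variable (q r : ℕ)

noncomputable def shiftOp : Module.End (ZMod q) (ZMod r → ZMod q) :=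
  LinearMap.funLeft (ZMod q) (ZMod q) (· + 1)

def triIndicator : ZMod r → ZMod q :=
  Pi.single (-1) 1 + Pi.single 0 1 + Pi.single 1 1

variable {q r}

theorem shiftOp_apply (w : ZMod r → ZMod q) (j : ZMod r) : shiftOp q r w j = w (j + 1) := rfl

theorem shiftOp_pow_apply (n : ℕ) (w : ZMod r → ZMod q) (j : ZMod r) :
    (shiftOp q r ^ n) w j = w (j + n) := by
  induction n generalizing w with
  | zero => simp
  | succ n ih =>
    rw [pow_succ, Module.End.mul_apply, ih, shiftOp_apply, Nat.cast_succ, add_assoc]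

theorem shiftOp_pow_card : shiftOp q r ^ r = 1 := by
  ext w j
  simp [shiftOp_pow_apply]

theorem Fintype.sum_smul_single_sub {ι R : Type*} [AddCommGroup ι] [Fintype ι] [DecidableEq ι]
    [Semiring R] (w : ι → R) (d j : ι) :
    ∑ c, w c • (Pi.single d 1 : ι → R) (j - c) = w (j - d) := by
  simp [Pi.single_apply, sub_eq_iff_comm (a := j)]

theorem shiftOp_sq_add_add_one_apply [NeZero r] (w : ZMod r → ZMod q) :
    (shiftOp q r ^ 2 + shiftOp q r + 1 : Module.End (ZMod q) (ZMod r → ZMod q)) w =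
      ∑ c, w (c + 1) • fun j => triIndicator q r (j - c) := by
  ext j
  simp only [LinearMap.add_apply, Pi.add_apply, shiftOp_pow_apply, Module.End.one_apply,
    Finset.sum_apply, Pi.smul_apply, smul_add, Finset.sum_add_distrib, triIndicator,
    Fintype.sum_smul_single_sub]
  simp only [shiftOp_apply, sub_neg_eq_add, sub_zero, sub_add_cancel, Nat.cast_ofNat, add_assoc,
    one_add_one_eq_two]

theorem AddSubgroup.eq_top_of_forall_triIndicator_translate_mem {p a b : ℕ} (hp : p.Prime)
    (hp3 : p ≠ 3) (hq : q = p ^ a) (hr : r = p ^ b) (S : AddSubgroup (ZMod r → ZMod q))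
    (hS : ∀ c, (fun j => triIndicator q r (j - c)) ∈ S) : S = ⊤ := by
  have : NeZero r := ⟨hr ▸ pow_ne_zero b hp.ne_zero⟩
  have hq0 : ((q : ℕ) : Module.End (ZMod q) (ZMod r → ZMod q)) = 0 := by ext; simp
  have hnil : IsNilpotent (shiftOp q r - 1) :=
    isNilpotent_sub_one_of_pow_prime_pow_eq_one hp ⟨a, by rw [← Nat.cast_pow, ← hq, hq0]⟩
      (by rw [← hr, shiftOp_pow_card])
  have h3 : IsUnit (3 : ZMod q) := by
    rw [← Nat.cast_ofNat, ZMod.isUnit_iff_coprime, hq]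
    exact ((Nat.coprime_primes Nat.prime_three hp).mpr hp3.symm).pow_right a
  have hunit := isUnit_sq_add_add_one_of_isNilpotent_sub_one (by
    simpa only [map_ofNat] using h3.map (algebraMap (ZMod q) (Module.End (ZMod q) _))) hnil
  refine (eq_top_iff' S).mpr fun w => ?_
  obtain ⟨u, rfl⟩ := ((Module.End.isUnit_iff _).mp hunit).surjective w
  rw [shiftOp_sq_add_add_one_apply]
  exact sum_mem fun c _ => (AddSubgroup.toZModSubmodule q S).smul_mem _ (hS c)

end Shift

namespace SemidirectProduct

variable {N G : Type*} [Group G]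

theorem mul_inl_mul_inv [CommGroup N] {φ : G →* MulAut N} (z : N ⋊[φ] G) (n : N) :
    z * inl n * z⁻¹ = inl (φ z.right n) := by
  ext <;> simp [mul_comm]

theorem eq_top_of_inl_mem [Group N] {φ : G →* MulAut N} {K : Subgroup (N ⋊[φ] G)}
    (hN : ∀ n, inl n ∈ K) (hG : ∀ g, ∃ k ∈ K, k.right = g) : K = ⊤ := by
  refine (Subgroup.eq_top_iff' K).mpr fun z => ?_
  obtain ⟨k, hk, hkz⟩ := hG z.right
  have : z = inl (z.left * k.left⁻¹) * k := by ext <;> simp [hkz]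
  rw [this]
  exact mul_mem (hN _) hk

end SemidirectProduct

section WreathProduct

variable (q r : ℕ)

theorem wrAct_apply (c : Multiplicative (ZMod r)) (f : ZMod r → Multiplicative (ZMod q))
    (j : ZMod r) : wrAct q r c f j = f (j - c.toAdd) := rfl

theorem inl_ofAdd_triIndicator :
    (SemidirectProduct.inl fun j => Multiplicative.ofAdd (triIndicator q r j) : Wr q r) =
      ((wy q r)⁻¹ * wx q r * wy q r) * wx q r * (wy q r * wx q r * (wy q r)⁻¹) := by
  have h := fun z : Wr q r => SemidirectProduct.mul_inl_mul_inv z (Pi.mulSingle 0 (.ofAdd 1))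
  have h₁ := h (wy q r)⁻¹
  rw [inv_inv] at h₁
  rw [wx, h₁, h, ← map_mul, ← map_mul]
  congr 1
  ext j
  simp only [wy, SemidirectProduct.inv_right, SemidirectProduct.right_inr, Pi.mul_apply,
    wrAct_apply]
  simp [triIndicator, Pi.single_apply, Pi.mulSingle_apply, add_eq_zero_iff_eq_neg, sub_eq_zero,
    apply_ite Multiplicative.toAdd]
  split_ifs <;> ring

theorem right_wx_mul_wy_mul_wx_pow (n : ℕ) :
    ((wx q r * wy q r * wx q r) ^ n).right = .ofAdd (n : ZMod r) := by
  rw [← SemidirectProduct.rightHom_eq_right, map_pow]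
  simp [wx, wy, ← ofAdd_nsmul]

theorem wx_mul_wy_mul_wx_pow_val_conj_inl [NeZero r] (c : ZMod r)
    (f : ZMod r → Multiplicative (ZMod q)) :
    (wx q r * wy q r * wx q r) ^ c.val * SemidirectProduct.inl f *
      ((wx q r * wy q r * wx q r) ^ c.val)⁻¹ = SemidirectProduct.inl fun j => f (j - c) := by
  rw [SemidirectProduct.mul_inl_mul_inv, right_wx_mul_wy_mul_wx_pow, ZMod.natCast_zmod_val]
  rfl

end WreathProduct

theorem stmt8_general (p a b : ℕ) (hp : p.Prime) (hp3 : p ≠ 3) (q r : ℕ)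
    (hq : q = p ^ a) (hr : r = p ^ b) :
    closure {wx q r * wy q r * wx q r,
      ((wy q r)⁻¹ * wx q r * wy q r) * wx q r * (wy q r * wx q r * (wy q r)⁻¹)} = ⊤ := by
  have : NeZero r := ⟨hr ▸ pow_ne_zero b hp.ne_zero⟩
  set u := wx q r * wy q r * wx q r
  set K := closure {u, ((wy q r)⁻¹ * wx q r * wy q r) * wx q r * (wy q r * wx q r * (wy q r)⁻¹)}
  have hu : u ∈ K := subset_closure (Set.mem_insert _ _)
  have hv : SemidirectProduct.inl (fun j => .ofAdd (triIndicator q r j)) ∈ K := by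
    rw [inl_ofAdd_triIndicator]
    exact subset_closure (Set.mem_insert_of_mem _ rfl)
  -- `w ∈ S ↔ inl (ofAdd ∘ w) ∈ K` holds definitionally
  let S : AddSubgroup (ZMod r → ZMod q) :=
    (K.comap (SemidirectProduct.inl.comp (MulEquiv.piMultiplicative _).toMonoidHom)).toAddSubgroup'
  have hS : S = ⊤ := AddSubgroup.eq_top_of_forall_triIndicator_translate_mem hp hp3 hq hr S
    fun c => by
      have := mul_mem (mul_mem (pow_mem hu c.val) hv) (inv_mem (pow_mem hu c.val))
      rwa [wx_mul_wy_mul_wx_pow_val_conj_inl] at this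
  have hbase (f : ZMod r → Multiplicative (ZMod q)) : SemidirectProduct.inl f ∈ K :=
    (AddSubgroup.eq_top_iff' S).mp hS fun j => (f j).toAdd
  refine SemidirectProduct.eq_top_of_inl_mem hbase fun g => ⟨u ^ g.toAdd.val, pow_mem hu _, ?_⟩
  rw [right_wx_mul_wy_mul_wx_pow, ZMod.natCast_zmod_val, ofAdd_toAdd]

/-- for q, r powers of a prime p ≠ 3 with r > 1, the elements x·y·x and
x^y·x·x^{y⁻¹} generate C_q ≀ C_r (here x^g = g⁻¹xg). -/
theorem stmt8 (p a b : ℕ) (hp : p.Prime) (hp3 : p ≠ 3) (q r : ℕ)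
    (hq : q = p ^ a) (hr : r = p ^ b) (hb : 1 ≤ b) :
    closure {wx q r * wy q r * wx q r,
      ((wy q r)⁻¹ * wx q r * wy q r) * wx q r * (wy q r * wx q r * (wy q r)⁻¹)} = ⊤ :=
  stmt8_general p a b hp hp3 q r hq hr
end

section
/- Let A be a finite abelian group written multiplicatively, let y act on a family of commuting elements x^{yⁱ} indexed by i ∈ Z/rZ inside a group G with abelian normal subgroup containing all x^{yⁱ}, and suppose 3 is coprime to r and to the order of x. If a subgroup H of G contains x·x^{-y³ᵏ} for some k and is closed under conjugation by an element inducing i ↦ i+3 on the indices, then H contains x·x^{-yⁱ} for all i ∈ 3·Z/rZ = Z/rZ; together with x^y·x·x^{y⁻¹} ∈ H this yields x³ ∈ H and hence x ∈ H. -/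
open Subgroup

/-!
Write `xᵢ = x^{yⁱ}`; the indices live in `ℤ/r`. Since `3` is invertible mod `r`, a suitable power
of `c` shifts indices by any prescribed amount, so `H` is stable under every index shift.
Shifting `x₁x₀x₋₁ ∈ H` by one and dividing gives `x₋₁x₂⁻¹ ∈ H`, hence `xᵢxᵢ₊₃⁻¹ ∈ H` for all `i`,
and telescoping along steps of `3` (which again reach every residue) gives `x₀xᵢ⁻¹ ∈ H`.
Then `(x₀x₁⁻¹)(x₁x₀x₋₁)(x₀x₋₁⁻¹) = x₀³`, and `x` is a power of `x³` as `3` is prime to its order.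
-/

theorem Int.exists_nat_mul_modEq {s r : ℕ} (hr : r ≠ 0) (hs : s.Coprime r) (t : ℤ) :
    ∃ n : ℕ, (s * n : ℤ) ≡ t [ZMOD r] := by
  have : NeZero r := ⟨hr⟩
  obtain ⟨u, hu⟩ := (ZMod.isUnit_iff_coprime s r).mpr hs
  refine ⟨((u⁻¹ : (ZMod r)ˣ) * (t : ZMod r)).val, ?_⟩
  rw [← ZMod.intCast_eq_intCast_iff]
  push_cast
  rw [ZMod.natCast_val, ZMod.cast_id, ← hu, ← mul_assoc, Units.mul_inv, one_mul]

namespace Subgroup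

variable {G : Type*} [Group G] (H : Subgroup G) (f : ℤ → G)

def IsShiftStable : Prop :=
  ∀ t : ℤ, ∃ ψ : Monoid.End G, Set.MapsTo ψ H H ∧ ∀ i, ψ (f i) = f (i + t)

variable {H f}

theorem isShiftStable_of_coprime {r s : ℕ} (hr : r ≠ 0) (hs : s.Coprime r)
    (hf : ∀ i j, i ≡ j [ZMOD r] → f i = f j) {φ : Monoid.End G} (hφH : Set.MapsTo φ H H)
    (hφ : Function.Semiconj f (· + (s : ℤ)) φ) : H.IsShiftStable f := by
  intro t
  obtain ⟨n, hn⟩ := Int.exists_nat_mul_modEq hr hs t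
  refine ⟨φ ^ n, hφH.iterate n, fun i => ?_⟩
  rw [Monoid.End.coe_pow, ← hφ.iterate_right n i, add_right_iterate, nsmul_eq_mul]
  exact hf _ _ (Int.ModEq.add_left i (by rwa [mul_comm]))

theorem mul_inv_mem_of_mul_mem {a b c d : G} (hac : Commute a c) (hbc : Commute b c)
    (habc : a * b * c ∈ H) (hdab : d * a * b ∈ H) : c * d⁻¹ ∈ H := by
  have key : a * b * c * (d * a * b)⁻¹ = c * d⁻¹ := by
    calc a * b * c * (d * a * b)⁻¹ = a * (b * c) * b⁻¹ * a⁻¹ * d⁻¹ := by group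
      _ = (a * c) * a⁻¹ * d⁻¹ := by rw [hbc.eq]; group
      _ = c * d⁻¹ := by rw [hac.eq]; group
  exact key ▸ mul_mem habc (inv_mem hdab)

theorem IsShiftStable.mul_inv_mem_add_three (hH : H.IsShiftStable f)
    (hcomm : ∀ i j, Commute (f i) (f j)) (hmem : f 1 * f 0 * f (-1) ∈ H) (i : ℤ) :
    f i * (f (i + 3))⁻¹ ∈ H := by
  have hshift (t : ℤ) : f (t + 1) * f t * f (t - 1) ∈ H := by
    obtain ⟨ψ, hψH, hψ⟩ := hH t
    have h := hψH hmem
    simp only [SetLike.mem_coe, map_mul, hψ] at h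
    ring_nf at h ⊢
    exact h
  have h₁ := hshift (i + 1)
  have h₂ := hshift (i + 2)
  ring_nf at h₁ h₂ ⊢
  exact mul_inv_mem_of_mul_mem (hcomm _ _) (hcomm _ _) h₁ h₂

theorem mul_inv_mem_of_step {s : ℤ} (hstep : ∀ i, f i * (f (i + s))⁻¹ ∈ H) (i : ℤ) (n : ℕ) :
    f i * (f (i + n * s))⁻¹ ∈ H := by
  induction n with
  | zero => simp
  | succ n ih =>
    have h := mul_mem ih (hstep (i + n * s))
    rwa [mul_assoc, inv_mul_cancel_left, add_assoc, ← add_one_mul, ← Nat.cast_succ] at h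

theorem mul_inv_mem_of_coprime {r s : ℕ} (hr : r ≠ 0) (hs : s.Coprime r)
    (hf : ∀ i j, i ≡ j [ZMOD r] → f i = f j) (hstep : ∀ i, f i * (f (i + s))⁻¹ ∈ H) (i j : ℤ) :
    f i * (f j)⁻¹ ∈ H := by
  obtain ⟨n, hn⟩ := Int.exists_nat_mul_modEq hr hs (j - i)
  have hij : i + n * s ≡ j [ZMOD r] := by
    simpa [mul_comm] using Int.ModEq.add_left i hn
  exact hf _ _ hij ▸ mul_inv_mem_of_step hstep i n

theorem pow_three_mem_of_mul_mem {a b c : G} (hbc : Commute b c) (hba : b * a⁻¹ ∈ H)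
    (habc : a * b * c ∈ H) (hbc_mem : b * c⁻¹ ∈ H) : b ^ 3 ∈ H := by
  have key : b * a⁻¹ * (a * b * c) * (b * c⁻¹) = b ^ 3 := by
    calc b * a⁻¹ * (a * b * c) * (b * c⁻¹) = b * b * (c * b) * c⁻¹ := by group
      _ = b * b * b := by rw [← hbc.eq]; group
      _ = b ^ 3 := (pow_three' b).symm
  exact key ▸ mul_mem (mul_mem hba habc) hbc_mem

end Subgroup

theorem stmt17_general {G : Type*} [Group G] (x y : G) (r : ℕ) (H : Subgroup G)
    (hcomm : ∀ i j : ℤ, Commute ((y ^ i)⁻¹ * x * y ^ i) ((y ^ j)⁻¹ * x * y ^ j))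
    (hr : orderOf y = r) (h3r : Nat.Coprime 3 r) (h3q : Nat.Coprime 3 (orderOf x))
    (c : G)
    (hc : ∀ i : ℤ, c⁻¹ * ((y ^ i)⁻¹ * x * y ^ i) * c = (y ^ (i + 3))⁻¹ * x * y ^ (i + 3))
    (hcH : ∀ h ∈ H, c⁻¹ * h * c ∈ H)
    (hb : (y⁻¹ * x * y) * x * (y * x * y⁻¹) ∈ H) :
    (∀ i : ℤ, x * ((y ^ i)⁻¹ * x * y ^ i)⁻¹ ∈ H) ∧ x ^ 3 ∈ H ∧ x ∈ H := by
  let f : ℤ → G := fun i => (y ^ i)⁻¹ * x * y ^ i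
  have hr0 : r ≠ 0 := by
    rintro rfl
    norm_num at h3r
  have hf : ∀ i j, i ≡ j [ZMOD r] → f i = f j := fun i j hij => by
    simp only [f, zpow_eq_zpow_iff_modEq.mpr (hr ▸ hij)]
  have hH : H.IsShiftStable f := by
    refine isShiftStable_of_coprime (φ := (MulAut.conj c⁻¹).toMonoidHom) hr0 h3r hf ?_ ?_
    · intro h hh
      show c⁻¹ * h * c⁻¹⁻¹ ∈ H
      simpa only [inv_inv] using hcH h hh
    · intro i
      show f (i + (3 : ℕ)) = c⁻¹ * f i * c⁻¹⁻¹
      simpa only [inv_inv, Nat.cast_ofNat] using (hc i).symm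
  have hmem : f 1 * f 0 * f (-1) ∈ H := by simpa [f] using hb
  have hall : ∀ j, f 0 * (f j)⁻¹ ∈ H :=
    mul_inv_mem_of_coprime hr0 h3r hf (hH.mul_inv_mem_add_three hcomm hmem) 0
  have hx3 : x ^ 3 ∈ H := by
    simpa [f] using pow_three_mem_of_mul_mem (hcomm 0 (-1)) (hall 1) hmem (hall (-1))
  obtain ⟨m, hm⟩ := exists_pow_eq_self_of_coprime h3q
  exact ⟨fun i => by simpa [f] using hall i, hx3, hm ▸ pow_mem hx3 m⟩

/-- the iterative conjugation step in the generation argument. Suppose the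
conjugates x^{yⁱ} pairwise commute, y has order r with gcd(3, r) = 1, gcd(3, orderOf x) = 1,
the subgroup H contains x·x^{-y^{3k}} for some k ≥ 1, H is closed under conjugation by an
element c inducing i ↦ i + 3 on the conjugates x^{yⁱ}, and x^y·x·x^{y⁻¹} ∈ H. Then H
contains x·x^{-yⁱ} for every i, hence x³ ∈ H and finally x ∈ H. -/
theorem stmt17 {G : Type*} [Group G] [Finite G] (x y : G) (r : ℕ) (H : Subgroup G)
    (hcomm : ∀ i j : ℤ, Commute ((y ^ i)⁻¹ * x * y ^ i) ((y ^ j)⁻¹ * x * y ^ j))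
    (hr : orderOf y = r) (h3r : Nat.Coprime 3 r) (h3q : Nat.Coprime 3 (orderOf x))
    (k : ℕ) (hk : 1 ≤ k)
    (hstart : x * ((y ^ (3 * k : ℕ))⁻¹ * x * y ^ (3 * k : ℕ))⁻¹ ∈ H)
    (c : G)
    (hc : ∀ i : ℤ, c⁻¹ * ((y ^ i)⁻¹ * x * y ^ i) * c = (y ^ (i + 3))⁻¹ * x * y ^ (i + 3))
    (hcH : ∀ h ∈ H, c⁻¹ * h * c ∈ H)
    (hb : (y⁻¹ * x * y) * x * (y * x * y⁻¹) ∈ H) :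
    (∀ i : ℤ, x * ((y ^ i)⁻¹ * x * y ^ i)⁻¹ ∈ H) ∧ x ^ 3 ∈ H ∧ x ∈ H :=
  stmt17_general x y r H hcomm hr h3r h3q c hc hcH hb
end
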